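/- Let R(A', A, A'') be a recollement of abelian categories with functors i^*, i_*, i^!, j_!, j^*, j_*, and let X be a resolving subcategory of A. Assume i_*(i^*(X)) ⊆ X, j_!(j^*(X)) ⊆ X, and j_* is exact. Then: (1) gl.dim_X(A) ≤ gl.dim_{i^*X}(A') + gl.dim_{j^*X}(A'') + 1; (2) gl.dim_{j^*X}(A'') ≤ gl.dim_X(A) (inequalities in ℕ ∪ {∞}). -/

import Mathlib

/-!
Write `Y' = i^*X` and `Y'' = j^*X`. Since `j_!` is fully faithful and `j_! j^* X ⊆ X`, an object
`N` of `A''` lies in `Y''` iff `j_! N ∈ X`; hence `Y''` contains the projectives and is closed under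
kernels of epimorphisms, and the `k`-th projective syzygy of an object of `Y''`-dimension `≤ k`
lies in `Y''`.

Given `M` in `A` with `k`-th projective syzygy `L`, the exact functor `j^*` (which preserves
projectives because its right adjoint `j_*` is exact) makes `j^* L` a `k`-th syzygy of `j^* M`, so
`j_! j^* L ∈ X`. The counit `j_! j^* L → L` becomes invertible under `j^*`, so its kernel and
cokernel lie in the image of `i_*`; applying the exact functor `i_*` to `Y'`-resolutions gives them
`X`-resolutions of length `gl.dim_{Y'} A'`. Hence `L` has an `X`-resolution of length
`gl.dim_{Y'} A' + 1` and `M` one of length `gl.dim_{Y'} A' + 1 + k`.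

For the second inequality, `j^*` is exact and essentially surjective, so it carries
`X`-resolutions of `j_! N` to `Y''`-resolutions of `N ≅ j^* j_! N`.
-/

open CategoryTheory CategoryTheory.Limits

namespace Paper

variable {C : Type*} [Category C] [Abelian C]

/-- A complete projective resolution: an acyclic ℤ-indexed complex of projectives
such that `Hom(P•, Q)` is exact for every projective `Q`. -/
structure IsCompleteProjectiveResolution (P : ChainComplex C ℤ) : Prop where
  projective : ∀ n : ℤ, Projective (P.X n)
  exactAt : ∀ n : ℤ, P.ExactAt n
  homExact : ∀ (Q : C), Projective Q → ∀ (n : ℤ) (f : P.X n ⟶ Q),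
    P.d (n + 1) n ≫ f = 0 → ∃ g : P.X (n - 1) ⟶ Q, P.d n (n - 1) ≫ g = f

/-- An object is Gorenstein projective if it is isomorphic to `Im (P₀ ⟶ P₋₁)`
for some complete projective resolution `P•`. -/
def IsGorensteinProjective (M : C) : Prop :=
  ∃ P : ChainComplex C ℤ, IsCompleteProjectiveResolution P ∧
    Nonempty (M ≅ Limits.image (P.d 0 (-1)))

variable {D : Type*} [Category D] [Abelian D]

/-- A functor is weak perfect if it sends every exact complex of projective
objects to an exact complex. -/
def WeakPerfect (F : C ⥤ D) [F.Additive] : Prop :=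
  ∀ P : ChainComplex C ℤ, (∀ n : ℤ, Projective (P.X n)) → (∀ n : ℤ, P.ExactAt n) →
    ∀ n : ℤ, (((F.mapHomologicalComplex (ComplexShape.down ℤ)).obj P).ExactAt n)

/-- Condition (SP2): for every complete projective resolution `P•` in the target
category and every projective `Q` in the source category, `Hom(P•, T Q)` is exact. -/
def SatisfiesSP2 (T : C ⥤ D) : Prop :=
  ∀ P : ChainComplex D ℤ, IsCompleteProjectiveResolution P →
    ∀ (Q : C), Projective Q → ∀ (n : ℤ) (f : P.X n ⟶ T.obj Q),
      P.d (n + 1) n ≫ f = 0 → ∃ g : P.X (n - 1) ⟶ T.obj Q, P.d n (n - 1) ≫ g = f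

/-- `IsRelativeSyzygy P n A M` : there exists an exact sequence
`0 → A → X_{n-1} → ⋯ → X₀ → M → 0` with every `Xᵢ` satisfying `P`
(defined by splicing short exact sequences). For `n = 0` it degenerates to `A ≅ M`. -/
def IsRelativeSyzygy (P : C → Prop) : ℕ → C → C → Prop
  | 0, A, M => Nonempty (A ≅ M)
  | n + 1, A, M => ∃ S : ShortComplex C, S.ShortExact ∧ P S.X₂ ∧
      Nonempty (S.X₃ ≅ M) ∧ IsRelativeSyzygy P n A S.X₁

/-- A resolving class of objects: contains all projectives, closed under direct
summands, and for any short exact sequence `0 → A → B → C → 0` with `C` in the class,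
`A` is in the class iff `B` is. -/
structure IsResolving (X : Set C) : Prop where
  projective_mem : ∀ P : C, Projective P → P ∈ X
  summand_mem : ∀ M ∈ X, ∀ (N : C) (s : N ⟶ M) (r : M ⟶ N), s ≫ r = 𝟙 N → N ∈ X
  two_of_three : ∀ S : ShortComplex C, S.ShortExact → S.X₃ ∈ X → (S.X₁ ∈ X ↔ S.X₂ ∈ X)

/-- `HasResolutionLength Y n M` : there is an exact sequence
`0 → P_n → ⋯ → P₀ → M → 0` with all `Pᵢ ∈ Y` (defined by splicing). -/
def HasResolutionLength (Y : Set C) : ℕ → C → Prop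
  | 0, M => ∃ P ∈ Y, Nonempty (M ≅ P)
  | n + 1, M => ∃ S : ShortComplex C, S.ShortExact ∧ S.X₂ ∈ Y ∧
      Nonempty (S.X₃ ≅ M) ∧ HasResolutionLength Y n S.X₁

/-- The `Y`-projective dimension of `M`, in `ℕ∞`. -/
noncomputable def pdim (Y : Set C) (M : C) : ℕ∞ :=
  sInf {n : ℕ∞ | ∃ m : ℕ, n = (m : ℕ∞) ∧ HasResolutionLength Y m M}

/-- The `Y`-global dimension of the ambient category. -/
noncomputable def gldim (Y : Set C) : ℕ∞ := ⨆ M : C, pdim Y M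

/-- A recollement of abelian categories. -/
structure Recollement (A₁ A₀ A₂ : Type*)
    [Category A₁] [Category A₀] [Category A₂]
    [Abelian A₁] [Abelian A₀] [Abelian A₂] where
  /-- `i^*` -/
  iStar : A₀ ⥤ A₁
  /-- `i_*` -/
  iPush : A₁ ⥤ A₀
  /-- `i^!` -/
  iShriek : A₀ ⥤ A₁
  /-- `j_!` -/
  jShriek : A₂ ⥤ A₀
  /-- `j^*` -/
  jStar : A₀ ⥤ A₂
  /-- `j_*` -/
  jPush : A₂ ⥤ A₀
  iStar_additive : iStar.Additive
  iPush_additive : iPush.Additive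
  iShriek_additive : iShriek.Additive
  jShriek_additive : jShriek.Additive
  jStar_additive : jStar.Additive
  jPush_additive : jPush.Additive
  adj₁ : iStar ⊣ iPush
  adj₂ : iPush ⊣ iShriek
  adj₃ : jShriek ⊣ jStar
  adj₄ : jStar ⊣ jPush
  iPush_full : iPush.Full
  iPush_faithful : iPush.Faithful
  jShriek_full : jShriek.Full
  jShriek_faithful : jShriek.Faithful
  jPush_full : jPush.Full
  jPush_faithful : jPush.Faithful
  essImage_iPush : ∀ X : A₀, iPush.essImage X ↔ Limits.IsZero (jStar.obj X)

section Resolutions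

variable {C : Type*} [Category C] [Abelian C]

structure IsEpiKernelClosed (Y : Set C) : Prop where
  projective_mem : ∀ P : C, Projective P → P ∈ Y
  mem_of_iso : ∀ {M N : C}, (M ≅ N) → M ∈ Y → N ∈ Y
  biprod_mem : ∀ {M N : C}, M ∈ Y → N ∈ Y → (M ⊞ N) ∈ Y
  X₁_mem : ∀ {S : ShortComplex C}, S.ShortExact → S.X₂ ∈ Y → S.X₃ ∈ Y → S.X₁ ∈ Y

namespace IsResolving

variable {X : Set C} (hX : IsResolving X)
include hX

theorem mem_of_iso {M N : C} (e : M ≅ N) (hM : M ∈ X) : N ∈ X :=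
  hX.summand_mem M hM N e.inv e.hom e.inv_hom_id

theorem X₂_mem {S : ShortComplex C} (hS : S.ShortExact) (h₁ : S.X₁ ∈ X) (h₃ : S.X₃ ∈ X) :
    S.X₂ ∈ X :=
  (hX.two_of_three S hS h₃).1 h₁

theorem isEpiKernelClosed : IsEpiKernelClosed X where
  projective_mem := hX.projective_mem
  mem_of_iso := hX.mem_of_iso
  biprod_mem {M N} hM hN :=
    hX.X₂_mem (ShortComplex.Splitting.ofHasBinaryBiproduct M N).shortExact hM hN
  X₁_mem hS h₂ h₃ := (hX.two_of_three _ hS h₃).2 h₂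

end IsResolving

theorem shortExact_kernelSequence {M N : C} (q : M ⟶ N) [Epi q] :
    (ShortComplex.kernelSequence q).ShortExact :=
  .mk' (ShortComplex.kernelSequence_exact q) inferInstance ‹_›

theorem shortExact_biprod {S T : ShortComplex C} (hS : S.ShortExact) (hT : T.ShortExact) :
    (ShortComplex.mk (biprod.map S.f T.f) (biprod.map S.g T.g) (by ext <;> simp)).ShortExact := by
  have := hS.mono_f; have := hT.mono_f; have := hS.epi_g; have := hT.epi_g
  refine .mk' (ShortComplex.exact_of_f_is_kernel _ (KernelFork.IsLimit.ofι' _ _ fun k hk => ?_))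
    inferInstance inferInstance
  refine ⟨biprod.lift (hS.exact.lift (k ≫ biprod.fst) ?_) (hT.exact.lift (k ≫ biprod.snd) ?_), ?_⟩
  · simpa using hk =≫ biprod.fst
  · simpa using hk =≫ biprod.snd
  · ext <;> simp

/-- The base change `0 → S.X₁ → S.X₂ ×_{S.X₃} Z → Z → 0` of `S` along `h`. -/
noncomputable abbrev baseChange (S : ShortComplex C) {Z : C} (h : Z ⟶ S.X₃) : ShortComplex C :=
  ShortComplex.mk (pullback.lift S.f 0 (by rw [S.zero, zero_comp])) (pullback.snd S.g h)
    (by simp [pullback.lift_snd])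

theorem shortExact_baseChange {S : ShortComplex C} (hS : S.ShortExact) {Z : C} (h : Z ⟶ S.X₃) :
    (baseChange S h).ShortExact := by
  have := hS.mono_f
  have := hS.epi_g
  have : Mono (baseChange S h).f := mono_of_mono_fac (pullback.lift_fst _ _ _)
  refine .mk' (ShortComplex.exact_of_f_is_kernel _
    (KernelFork.IsLimit.ofι' _ _ fun (k : _ ⟶ pullback S.g h) hk => ?_)) inferInstance inferInstance
  have hk' : (k ≫ pullback.fst S.g h) ≫ S.g = 0 := by
    rw [Category.assoc, pullback.condition, ← Category.assoc, hk, zero_comp]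
  refine ⟨hS.exact.lift _ hk', ?_⟩
  apply pullback.hom_ext
  · simp [pullback.lift_fst]
  · simpa [pullback.lift_snd] using hk.symm

/-- For `q : W ⟶ S.X₂`, the sequence `0 → W ×_{S.X₂} S.X₁ → W → S.X₃ → 0`. -/
noncomputable abbrev restrict (S : ShortComplex C) {W : C} (q : W ⟶ S.X₂) : ShortComplex C :=
  ShortComplex.mk (pullback.fst q S.f) (q ≫ S.g)
    (by rw [← Category.assoc, pullback.condition]; simp)

theorem shortExact_restrict {S : ShortComplex C} (hS : S.ShortExact) {W : C} (q : W ⟶ S.X₂)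
    [Epi q] : (restrict S q).ShortExact := by
  have := hS.mono_f
  have := hS.epi_g
  refine .mk' (ShortComplex.exact_of_f_is_kernel _
    (KernelFork.IsLimit.ofι' _ _ fun (k : _ ⟶ W) hk => ?_)) inferInstance (epi_comp _ _)
  rw [← Category.assoc] at hk
  exact ⟨pullback.lift k (hS.exact.lift _ hk) (by simp), by simp [pullback.lift_fst]⟩

variable {Y : Set C} {n : ℕ}

namespace HasResolutionLength

theorem of_iso : ∀ {n : ℕ} {M N : C}, (M ≅ N) → HasResolutionLength Y n M →
    HasResolutionLength Y n N
  | 0, _, _, e, ⟨P, hP, ⟨e'⟩⟩ => ⟨P, hP, ⟨e.symm ≪≫ e'⟩⟩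
  | _ + 1, _, _, e, ⟨S, hS, h₂, ⟨e'⟩, h₁⟩ => ⟨S, hS, h₂, ⟨e' ≪≫ e⟩, h₁⟩

theorem succ_of_shortExact {S : ShortComplex C} (hS : S.ShortExact) (h₂ : S.X₂ ∈ Y)
    (h₁ : HasResolutionLength Y n S.X₁) : HasResolutionLength Y (n + 1) S.X₃ :=
  ⟨S, hS, h₂, ⟨Iso.refl _⟩, h₁⟩

theorem exists_epi {M : C} (h : HasResolutionLength Y (n + 1) M) :
    ∃ (W : C) (q : W ⟶ M), Epi q ∧ W ∈ Y ∧ HasResolutionLength Y n (kernel q) := by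
  obtain ⟨S, hS, h₂, ⟨e⟩, h₁⟩ := h
  have := hS.epi_g
  refine ⟨S.X₂, S.g ≫ e.hom, epi_comp _ _, h₂, h₁.of_iso ?_⟩
  exact hS.fIsKernel.conePointUniqueUpToIso (kernelIsKernel S.g) ≪≫ (kernelCompMono _ _).symm

theorem succ (hY : ∀ P : C, Projective P → P ∈ Y) :
    ∀ {n : ℕ} {M : C}, HasResolutionLength Y n M → HasResolutionLength Y (n + 1) M
  | 0, _, ⟨_, hP, ⟨e⟩⟩ =>
    succ_of_shortExact (shortExact_kernelSequence e.inv) hP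
      ⟨_, hY _ (isZero_kernel_of_mono e.inv).projective, ⟨Iso.refl _⟩⟩
  | _ + 1, _, ⟨S, hS, h₂, e, h₁⟩ => ⟨S, hS, h₂, e, succ hY h₁⟩

theorem mono (hY : ∀ P : C, Projective P → P ∈ Y) {m : ℕ} {M : C}
    (h : HasResolutionLength Y m M) (hmn : m ≤ n) : HasResolutionLength Y n M := by
  induction n, hmn using Nat.le_induction with
  | base => exact h
  | succ n _ ih => exact ih.succ hY

theorem biprod (hY : ∀ {M N : C}, M ∈ Y → N ∈ Y → (M ⊞ N) ∈ Y) :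
    ∀ {n : ℕ} {M N : C}, HasResolutionLength Y n M → HasResolutionLength Y n N →
      HasResolutionLength Y n (M ⊞ N)
  | 0, _, _, ⟨P, hP, ⟨e⟩⟩, ⟨Q, hQ, ⟨e'⟩⟩ => ⟨P ⊞ Q, hY hP hQ, ⟨biprod.mapIso e e'⟩⟩
  | _ + 1, _, _, ⟨_, hS, h₂, ⟨e⟩, h₁⟩, ⟨_, hT, h₂', ⟨e'⟩, h₁'⟩ =>
    ⟨_, shortExact_biprod hS hT, hY h₂ h₂', ⟨biprod.mapIso e e'⟩, biprod hY h₁ h₁'⟩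

end HasResolutionLength

theorem hasResolutionLength_of_mem (hY : ∀ P : C, Projective P → P ∈ Y) {M : C} (hM : M ∈ Y)
    (n : ℕ) : HasResolutionLength Y n M :=
  HasResolutionLength.mono (m := 0) hY ⟨M, hM, ⟨Iso.refl M⟩⟩ n.zero_le

end Resolutions

section EpiKernelClosed

variable {C : Type*} [Category C] [Abelian C] {Y : Set C} (hY : IsEpiKernelClosed Y)
include hY

theorem hasResolutionLength_X₁ : ∀ {n : ℕ} {S : ShortComplex C}, S.ShortExact → S.X₃ ∈ Y →
    HasResolutionLength Y n S.X₂ → HasResolutionLength Y n S.X₁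
  | 0, _, hS, h₃, ⟨_, hQ, ⟨e⟩⟩ => ⟨_, hY.X₁_mem hS (hY.mem_of_iso e.symm hQ) h₃, ⟨Iso.refl _⟩⟩
  | _ + 1, S, hS, h₃, h₂ => by
    obtain ⟨W, q, _, hW, hK⟩ := h₂.exists_epi
    have hE : (restrict S q).X₁ ∈ Y := hY.X₁_mem (shortExact_restrict hS q) hW h₃
    exact .succ_of_shortExact (shortExact_baseChange (shortExact_kernelSequence q) S.f) hE hK

theorem hasResolutionLength_X₁_of_projective {n : ℕ} {S : ShortComplex C} (hS : S.ShortExact)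
    (hP : Projective S.X₂) (h₃ : HasResolutionLength Y (n + 1) S.X₃) :
    HasResolutionLength Y n S.X₁ := by
  obtain ⟨W, q, _, hW, hK⟩ := h₃.exists_epi
  -- `W ×_{S.X₃} S.X₂` is an extension of the projective `S.X₂` by `kernel q`, so it splits.
  have hsplit := (shortExact_baseChange (shortExact_kernelSequence q) S.g).splittingOfProjective
  have hE : HasResolutionLength Y n (pullback q S.g) :=
    (hK.biprod hY.biprod_mem (hasResolutionLength_of_mem hY.projective_mem
      (hY.projective_mem _ hP) n)).of_iso hsplit.isoBinaryBiproduct.symm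
  exact hasResolutionLength_X₁ hY (S := baseChange S q) (shortExact_baseChange hS q) hW
    (hE.of_iso (pullbackSymmetry _ _))

theorem IsRelativeSyzygy.mem_of_hasResolutionLength : ∀ {k n : ℕ} {L N : C},
    IsRelativeSyzygy (fun Z : C => Projective Z) k L N → HasResolutionLength Y n N → n ≤ k → L ∈ Y
  | 0, _, _, _, ⟨e⟩, h, hn => by
    obtain rfl := Nat.le_zero.1 hn
    obtain ⟨_, hQ, ⟨e'⟩⟩ := h
    exact hY.mem_of_iso (e ≪≫ e').symm hQ
  | k + 1, 0, _, _, ⟨S, hS, hP, ⟨e⟩, hL⟩, ⟨_, hQ, ⟨e'⟩⟩, _ =>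
    IsRelativeSyzygy.mem_of_hasResolutionLength hL (n := 0)
      ⟨_, hY.X₁_mem hS (hY.projective_mem _ hP) (hY.mem_of_iso (e ≪≫ e').symm hQ), ⟨Iso.refl _⟩⟩
      k.zero_le
  | _ + 1, _ + 1, _, _, ⟨_, hS, hP, ⟨e⟩, hL⟩, h, hn =>
    IsRelativeSyzygy.mem_of_hasResolutionLength hL
      (hasResolutionLength_X₁_of_projective hY hS hP (h.of_iso e.symm)) (by omega)

end EpiKernelClosed

section Resolving

variable {C : Type*} [Category C] [Abelian C] [EnoughProjectives C] {X : Set C}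

theorem IsResolving.hasResolutionLength_X₂ (hX : IsResolving X) : ∀ {n : ℕ} {S : ShortComplex C},
    S.ShortExact → HasResolutionLength X n S.X₁ → HasResolutionLength X n S.X₃ →
      HasResolutionLength X n S.X₂
  | 0, _, hS, ⟨_, h₁, ⟨e₁⟩⟩, ⟨_, h₃, ⟨e₃⟩⟩ =>
    ⟨_, hX.X₂_mem hS (hX.mem_of_iso e₁.symm h₁) (hX.mem_of_iso e₃.symm h₃), ⟨Iso.refl _⟩⟩
  | n + 1, S, hS, h₁, h₃ => by
    have hX' := hX.isEpiKernelClosed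
    let p := Projective.π S.X₃
    -- `S.X₂ ×_{S.X₃} P ≅ S.X₁ ⊞ P` covers `S.X₂` with kernel `kernel p`.
    have hE : HasResolutionLength X (n + 1) (pullback S.g p) :=
      (h₁.biprod hX'.biprod_mem (hasResolutionLength_of_mem hX.projective_mem
        (hX.projective_mem _ inferInstance) _)).of_iso
        (shortExact_baseChange hS p).splittingOfProjective.isoBinaryBiproduct.symm
    let T := baseChange (ShortComplex.kernelSequence p) S.g
    have hT : T.ShortExact := shortExact_baseChange (shortExact_kernelSequence p) S.g
    obtain ⟨W, q, _, hW, hK⟩ :=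
      (hE.of_iso (pullbackSymmetry _ _) : HasResolutionLength X (n + 1) T.X₂).exists_epi
    have hKp : HasResolutionLength X n (kernel p) :=
      hasResolutionLength_X₁_of_projective hX' (shortExact_kernelSequence p)
        (inferInstanceAs (Projective (Projective.over S.X₃))) h₃
    exact .succ_of_shortExact (shortExact_restrict hT q) hW
      (hX.hasResolutionLength_X₂ (shortExact_baseChange (shortExact_kernelSequence q) _) hK hKp)

theorem IsResolving.hasResolutionLength_of_kernel_cokernel (hX : IsResolving X) {n : ℕ} {E L : C}
    (f : E ⟶ L) (hE : E ∈ X) (hK : HasResolutionLength X n (kernel f))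
    (hQ : HasResolutionLength X (n + 1) (cokernel f)) : HasResolutionLength X (n + 1) L := by
  have hI : HasResolutionLength X (n + 1) (Abelian.image f) :=
    (HasResolutionLength.succ_of_shortExact (S := ShortComplex.cokernelSequence (kernel.ι f))
      (.mk' (ShortComplex.cokernelSequence_exact _) (inferInstanceAs (Mono (kernel.ι f)))
        inferInstance) hE hK).of_iso
      (Abelian.coimageIsoImage f)
  exact hX.hasResolutionLength_X₂ (shortExact_kernelSequence (cokernel.π f)) hI hQ

end Resolving

section Syzygies

variable {C : Type*} [Category C] [Abelian C]

theorem exists_isRelativeSyzygy [EnoughProjectives C] :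
    ∀ (k : ℕ) (M : C), ∃ L : C, IsRelativeSyzygy (fun Z : C => Projective Z) k L M
  | 0, M => ⟨M, ⟨Iso.refl M⟩⟩
  | k + 1, M => by
    obtain ⟨L, hL⟩ := exists_isRelativeSyzygy k (kernel (Projective.π M))
    exact ⟨L, _, shortExact_kernelSequence (Projective.π M),
      inferInstanceAs (Projective (Projective.over M)), ⟨Iso.refl M⟩, hL⟩

theorem IsRelativeSyzygy.hasResolutionLength_add {P : C → Prop} {Y : Set C}
    (hP : ∀ Z, P Z → Z ∈ Y) : ∀ {k n : ℕ} {L M : C}, IsRelativeSyzygy P k L M →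
      HasResolutionLength Y n L → HasResolutionLength Y (n + k) M
  | 0, _, _, _, ⟨e⟩, h => h.of_iso e
  | _ + 1, _, _, _, ⟨S, hS, hS₂, e, hL⟩, h =>
    ⟨S, hS, hP _ hS₂, e, IsRelativeSyzygy.hasResolutionLength_add hP hL h⟩

end Syzygies

section ExactFunctor

variable {C D : Type*} [Category C] [Category D] [Abelian C] [Abelian D] (F : C ⥤ D)
  [F.PreservesZeroMorphisms] [PreservesFiniteLimits F] [PreservesFiniteColimits F]

theorem HasResolutionLength.map {Y : Set C} {Y' : Set D} (hF : ∀ M ∈ Y, F.obj M ∈ Y') :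
    ∀ {n : ℕ} {M : C}, HasResolutionLength Y n M → HasResolutionLength Y' n (F.obj M)
  | 0, _, ⟨P, hP, ⟨e⟩⟩ => ⟨F.obj P, hF P hP, ⟨F.mapIso e⟩⟩
  | _ + 1, _, ⟨S, hS, h₂, ⟨e⟩, h₁⟩ =>
    ⟨S.map F, hS.map_of_exact F, hF _ h₂, ⟨F.mapIso e⟩, HasResolutionLength.map hF h₁⟩

theorem IsRelativeSyzygy.map {P : C → Prop} {P' : D → Prop} (hF : ∀ Z, P Z → P' (F.obj Z)) :
    ∀ {k : ℕ} {L M : C}, IsRelativeSyzygy P k L M → IsRelativeSyzygy P' k (F.obj L) (F.obj M)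
  | 0, _, _, ⟨e⟩ => ⟨F.mapIso e⟩
  | _ + 1, _, _, ⟨S, hS, h₂, ⟨e⟩, h₁⟩ =>
    ⟨S.map F, hS.map_of_exact F, hF _ h₂, ⟨F.mapIso e⟩, IsRelativeSyzygy.map hF h₁⟩

end ExactFunctor

section ImageClass

variable {C D : Type*} [Category C] [Category D]

abbrev imageClass (G : C ⥤ D) (X : Set C) : Set D :=
  {N | ∃ M ∈ X, Nonempty (N ≅ G.obj M)}

theorem mem_imageClass (G : C ⥤ D) {X : Set C} {M : C} (hM : M ∈ X) :
    G.obj M ∈ imageClass G X :=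
  ⟨M, hM, ⟨Iso.refl _⟩⟩

end ImageClass

section Dimensions

variable {C : Type*} [Category C] [Abelian C] {Y : Set C}

theorem pdim_le_of_hasResolutionLength {M : C} {n : ℕ} (h : HasResolutionLength Y n M) :
    pdim Y M ≤ n :=
  sInf_le ⟨n, rfl, h⟩

theorem gldim_le_of_forall_hasResolutionLength {n : ℕ} (h : ∀ M : C, HasResolutionLength Y n M) :
    gldim Y ≤ n :=
  iSup_le fun M => pdim_le_of_hasResolutionLength (h M)

theorem exists_hasResolutionLength_of_gldim_le {n : ℕ} (h : gldim Y ≤ n) (M : C) :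
    ∃ m ≤ n, HasResolutionLength Y m M := by
  have hM : pdim Y M ≤ n := (le_iSup (pdim Y) M).trans h
  have hne : {d : ℕ∞ | ∃ m : ℕ, d = m ∧ HasResolutionLength Y m M}.Nonempty := by
    by_contra hempty
    rw [Set.not_nonempty_iff_eq_empty] at hempty
    rw [pdim, hempty, sInf_empty, top_le_iff] at hM
    exact ENat.natCast_ne_top n hM
  obtain ⟨m, hm, hres⟩ := csInf_mem hne
  rw [pdim, hm, Nat.cast_le] at hM
  exact ⟨m, hM, hres⟩

theorem gldim_imageClass_le {D : Type*} [Category D] [Abelian D] (G : C ⥤ D) [G.EssSurj]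
    [G.PreservesZeroMorphisms] [PreservesFiniteLimits G] [PreservesFiniteColimits G]
    (X : Set C) : gldim (imageClass G X) ≤ gldim X := by
  refine iSup_le fun N => ?_
  calc pdim (imageClass G X) N ≤ pdim X (G.objPreimage N) := by
        refine le_sInf ?_
        rintro _ ⟨m, rfl, h⟩
        exact pdim_le_of_hasResolutionLength
          ((h.map G fun _ => mem_imageClass G).of_iso (G.objObjPreimageIso N))
    _ ≤ gldim X := le_iSup _ _

end Dimensions

section Adjunction

variable {C D : Type*} [Category C] [Category D] [Abelian C] {F : D ⥤ C} {G : C ⥤ D}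
  (adj : F ⊣ G) [F.Full] [F.Faithful] {X : Set C} (hX : IsResolving X)
  (hFG : ∀ M ∈ X, F.obj (G.obj M) ∈ X)
include adj hX hFG

theorem mem_imageClass_iff {N : D} : N ∈ imageClass G X ↔ F.obj N ∈ X :=
  ⟨fun ⟨M, hM, ⟨e⟩⟩ => hX.mem_of_iso (F.mapIso e).symm (hFG M hM),
    fun h => ⟨F.obj N, h, ⟨asIso (adj.unit.app N)⟩⟩⟩

theorem isEpiKernelClosed_imageClass [Abelian D] [G.PreservesEpimorphisms] :
    IsEpiKernelClosed (imageClass G X) := by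
  have := adj.isLeftAdjoint
  have := adj.isRightAdjoint
  have := preservesBinaryBiproducts_of_preservesBinaryCoproducts F
  refine ⟨fun Q hQ => ?_, fun e ⟨M, hM, ⟨e'⟩⟩ => ⟨M, hM, ⟨e.symm ≪≫ e'⟩⟩, fun {N N'} hN hN' => ?_,
    fun {S} hS h₂ h₃ => ?_⟩
  · exact (mem_imageClass_iff adj hX hFG).2 (hX.projective_mem _ (adj.map_projective Q hQ))
  · rw [mem_imageClass_iff adj hX hFG] at hN hN' ⊢
    exact hX.mem_of_iso (F.mapBiprod N N').symm (hX.isEpiKernelClosed.biprod_mem hN hN')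
  · rw [mem_imageClass_iff adj hX hFG] at h₂ h₃
    have := hS.epi_g
    refine ⟨_, hX.isEpiKernelClosed.X₁_mem (shortExact_kernelSequence (F.map S.g)) h₂ h₃, ⟨?_⟩⟩
    exact hS.fIsKernel.conePointUniqueUpToIso (kernelIsKernel S.g) ≪≫
      kernel.mapIso _ _ (asIso (adj.unit.app _)) (asIso (adj.unit.app _))
        (adj.unit_naturality S.g).symm ≪≫ (PreservesKernel.iso G _).symm

end Adjunction

namespace Recollement

variable {A' A A'' : Type*} [Category A'] [Category A] [Category A''] [Abelian A'] [Abelian A]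
  [Abelian A''] (R : Recollement A' A A'')

attribute [instance] iPush_additive jStar_additive jShriek_full jShriek_faithful

instance : R.iPush.IsLeftAdjoint := R.adj₂.isLeftAdjoint
instance : R.iPush.IsRightAdjoint := R.adj₁.isRightAdjoint
instance : R.jStar.IsLeftAdjoint := R.adj₄.isLeftAdjoint
instance : R.jStar.IsRightAdjoint := R.adj₃.isRightAdjoint

instance : R.jStar.EssSurj :=
  ⟨fun N => ⟨R.jShriek.obj N, ⟨(asIso (R.adj₃.unit.app N)).symm⟩⟩⟩

theorem essImage_iPush_kernel {E L : A} (f : E ⟶ L) [IsIso (R.jStar.map f)] :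
    R.iPush.essImage (kernel f) :=
  (R.essImage_iPush _).2 ((isZero_kernel_of_mono _).of_iso (PreservesKernel.iso R.jStar f))

theorem essImage_iPush_cokernel {E L : A} (f : E ⟶ L) [IsIso (R.jStar.map f)] :
    R.iPush.essImage (cokernel f) :=
  (R.essImage_iPush _).2 ((isZero_cokernel_of_epi _).of_iso (PreservesCokernel.iso R.jStar f))

variable {X : Set A} (hX : IsResolving X)
include hX

theorem hasResolutionLength_of_mem_essImage_iPush (hi : ∀ M ∈ X, R.iPush.obj (R.iStar.obj M) ∈ X)
    {m : ℕ} (hm : gldim (imageClass R.iStar X) ≤ m) {Z : A} (hZ : R.iPush.essImage Z) :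
    HasResolutionLength X m Z := by
  obtain ⟨W, ⟨e⟩⟩ := hZ
  obtain ⟨m', hm', h⟩ := exists_hasResolutionLength_of_gldim_le hm W
  have hmem : ∀ N ∈ imageClass R.iStar X, R.iPush.obj N ∈ X :=
    fun N ⟨M, hM, ⟨e'⟩⟩ => hX.mem_of_iso (R.iPush.mapIso e').symm (hi M hM)
  exact ((h.map R.iPush hmem).of_iso e).mono hX.projective_mem hm'

theorem gldim_le_add_add_one [EnoughProjectives A] [PreservesFiniteColimits R.jPush]
    (hi : ∀ M ∈ X, R.iPush.obj (R.iStar.obj M) ∈ X)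
    (hj : ∀ M ∈ X, R.jShriek.obj (R.jStar.obj M) ∈ X) {m k : ℕ}
    (hm : gldim (imageClass R.iStar X) ≤ m) (hk : gldim (imageClass R.jStar X) ≤ k) :
    gldim X ≤ m + k + 1 := by
  suffices ∀ M : A, HasResolutionLength X (m + 1 + k) M by
    exact_mod_cast gldim_le_of_forall_hasResolutionLength (n := m + k + 1)
      fun M => by simpa [Nat.add_right_comm] using this M
  intro M
  obtain ⟨L, hL⟩ := exists_isRelativeSyzygy k M
  obtain ⟨k', hk', hM⟩ := exists_hasResolutionLength_of_gldim_le hk (R.jStar.obj M)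
  have hjL : R.jStar.obj L ∈ imageClass R.jStar X :=
    (hL.map R.jStar fun Z hZ => R.adj₄.map_projective Z hZ).mem_of_hasResolutionLength
      (isEpiKernelClosed_imageClass R.adj₃ hX hj) hM hk'
  have hL' := hX.hasResolutionLength_of_kernel_cokernel (R.adj₃.counit.app L)
    ((mem_imageClass_iff R.adj₃ hX hj).1 hjL)
    (R.hasResolutionLength_of_mem_essImage_iPush hX hi hm (R.essImage_iPush_kernel _))
    ((R.hasResolutionLength_of_mem_essImage_iPush hX hi hm (R.essImage_iPush_cokernel _)).succ
      hX.projective_mem)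
  exact hL.hasResolutionLength_add hX.projective_mem hL'

end Recollement

theorem le_add_add_one_of_forall_nat {a b c : ℕ∞}
    (h : ∀ m k : ℕ, a ≤ m → b ≤ k → c ≤ m + k + 1) : c ≤ a + b + 1 := by
  induction a using ENat.recTopCoe with
  | top => simp
  | coe m =>
    induction b using ENat.recTopCoe with
    | top => simp
    | coe k => exact h m k le_rfl le_rfl

end Paper

theorem Paper.statement18_general
    {A' A A'' : Type*} [Category A'] [Category A] [Category A'']
    [Abelian A'] [Abelian A] [Abelian A'']
    [EnoughProjectives A]
    (R : Recollement A' A A'')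
    (X : Set A) (hX : IsResolving X)
    (hi : ∀ M ∈ X, R.iPush.obj (R.iStar.obj M) ∈ X)
    (hj : ∀ M ∈ X, R.jShriek.obj (R.jStar.obj M) ∈ X)
    [PreservesFiniteColimits R.jPush] :
    gldim X ≤ gldim {Y : A' | ∃ M ∈ X, Nonempty (Y ≅ R.iStar.obj M)}
        + gldim {Y : A'' | ∃ M ∈ X, Nonempty (Y ≅ R.jStar.obj M)} + 1 ∧
    gldim {Y : A'' | ∃ M ∈ X, Nonempty (Y ≅ R.jStar.obj M)} ≤ gldim X :=
  ⟨le_add_add_one_of_forall_nat fun _ _ hm hk => R.gldim_le_add_add_one hX hi hj hm hk,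
    gldim_imageClass_le R.jStar X⟩

/-- In a recollement `R(A', A, A'')` with `X` resolving in `A`,
`i_* i^* X ⊆ X`, `j_! j^* X ⊆ X` and `j_*` exact:
(1) `gl.dim_X A ≤ gl.dim_{i^*X} A' + gl.dim_{j^*X} A'' + 1`;
(2) `gl.dim_{j^*X} A'' ≤ gl.dim_X A`. -/
theorem Paper.statement18
    {A' A A'' : Type*} [Category A'] [Category A] [Category A'']
    [Abelian A'] [Abelian A] [Abelian A'']
    [EnoughProjectives A'] [EnoughInjectives A']
    [EnoughProjectives A] [EnoughInjectives A]
    [EnoughProjectives A''] [EnoughInjectives A'']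
    (R : Recollement A' A A'')
    (X : Set A) (hX : IsResolving X)
    (hi : ∀ M ∈ X, R.iPush.obj (R.iStar.obj M) ∈ X)
    (hj : ∀ M ∈ X, R.jShriek.obj (R.jStar.obj M) ∈ X)
    [PreservesFiniteLimits R.jPush] [PreservesFiniteColimits R.jPush] :
    gldim X ≤ gldim {Y : A' | ∃ M ∈ X, Nonempty (Y ≅ R.iStar.obj M)}
        + gldim {Y : A'' | ∃ M ∈ X, Nonempty (Y ≅ R.jStar.obj M)} + 1 ∧
    gldim {Y : A'' | ∃ M ∈ X, Nonempty (Y ≅ R.jStar.obj M)} ≤ gldim X :=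
  Paper.statement18_general R X hX hi hj
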